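/- Under the hypotheses of the selection CDF (Proposition 1 of the paper), for any j ∈ {1,…,N} and γ ≥ 0: P((m_j ≤ γ) ∩ (∩_{i≠j} {m_i < m_j}) ∩ {γ_{f_j} > γ}) = e^{−γ/σ_{f_j}²} · (1/σ_{g_j}²) ∫_0^γ e^{−β/σ_{g_j}²} ∏_{i≠j}(1 − e^{−(1/σ_{f_i}²+1/σ_{g_i}²)β}) dβ, where m_i = min{γ_{f_i}, γ_{g_i}}. -/

import Mathlib

/-!
Since `γ < γ_{f_j}` and `m_j ≤ γ`, the minimum `m_j` is `γ_{g_j}`, so the event is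
`{γ_{f_j} > γ} ∩ {γ_{g_j} ≤ γ, m_i < γ_{g_j} for all i ≠ j}`. Its two parts are independent,
and the first has probability `e^{-γ/σ_{f_j}²}`. For the second, condition on `γ_{g_j} = β`,
which is independent of the `m_i`: these are independent exponentials of rates
`1/σ_{f_i}² + 1/σ_{g_i}²`, so all of them lie below `β` with probability
`∏_{i≠j} (1 - e^{-(1/σ_{f_i}² + 1/σ_{g_i}²) β})`, and integrating this against the density of
`γ_{g_j}` over `[0, γ]` gives the formula.
-/

open MeasureTheory ProbabilityTheory Real
open scoped ENNReal

lemma Real.one_sub_exp_neg_mul_nonneg {c y : ℝ} (hc : 0 ≤ c) (hy : 0 ≤ y) :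
    0 ≤ 1 - exp (-(c * y)) :=
  sub_nonneg.2 (exp_le_one_iff.2 (neg_nonpos.2 (mul_nonneg hc hy)))

namespace ProbabilityTheory

open Set

variable {Ω ι : Type*} [MeasurableSpace Ω] {P : Measure Ω}

instance nullSingletonClass_expMeasure (r : ℝ) : NullSingletonClass (expMeasure r) :=
  ⟨fun y => withDensity_absolutelyContinuous volume _ (measure_singleton y)⟩

lemma expMeasure_Iic {r : ℝ} (hr : 0 < r) {y : ℝ} (hy : 0 ≤ y) :
    expMeasure r (Iic y) = ENNReal.ofReal (1 - exp (-(r * y))) := by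
  have := isProbabilityMeasure_expMeasure hr
  rw [← ofReal_cdf, cdf_expMeasure_eq hr, if_pos hy]

lemma expMeasure_Ioi {r : ℝ} (hr : 0 < r) {y : ℝ} (hy : 0 ≤ y) :
    expMeasure r (Ioi y) = ENNReal.ofReal (exp (-(r * y))) := by
  have := isProbabilityMeasure_expMeasure hr
  rw [← compl_Iic, prob_compl_eq_one_sub measurableSet_Iic, expMeasure_Iic hr hy,
    ← ENNReal.ofReal_one, ← ENNReal.ofReal_sub _ (one_sub_exp_neg_mul_nonneg hr.le hy),
    sub_sub_cancel]

lemma expMeasure_Ici {r : ℝ} (hr : 0 < r) {y : ℝ} (hy : 0 ≤ y) :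
    expMeasure r (Ici y) = ENNReal.ofReal (exp (-(r * y))) := by
  rw [← measure_congr Ioi_ae_eq_Ici, expMeasure_Ioi hr hy]

lemma map_eq_expMeasure_of_cdf [IsProbabilityMeasure P] {X : Ω → ℝ} (hX : Measurable X)
    {s : ℝ} (hs : 0 < s)
    (hcdf : ∀ x, 0 ≤ x → (P {ω | X ω ≤ x}).toReal = 1 - exp (-(x / s))) :
    P.map X = expMeasure (1 / s) := by
  have := isProbabilityMeasure_expMeasure (one_div_pos.2 hs)
  have := Measure.isProbabilityMeasure_map (μ := P) hX.aemeasurable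
  refine Measure.eq_of_cdf _ _ (StieltjesFunction.ext fun x => ?_)
  rw [cdf_eq_real, measureReal_def, Measure.map_apply hX measurableSet_Iic,
    cdf_expMeasure_eq (one_div_pos.2 hs)]
  split_ifs with hx
  · rw [one_div_mul_eq_div]
    exact hcdf x hx
  · -- no mass below `0`: the given CDF already vanishes at `0`
    refine le_antisymm ?_ ENNReal.toReal_nonneg
    calc (P (X ⁻¹' Iic x)).toReal ≤ (P {ω | X ω ≤ 0}).toReal :=
          ENNReal.toReal_mono (measure_ne_top _ _)
            (measure_mono fun ω (h : X ω ≤ x) => (h.trans (not_le.1 hx).le : X ω ≤ 0))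
      _ = 0 := by simp [hcdf 0 le_rfl]

lemma measure_min_lt_of_indepFun [IsProbabilityMeasure P] {X Y : Ω → ℝ} (hX : Measurable X)
    (hY : Measurable Y) (hXY : X ⟂ᵢ[P] Y) {r s : ℝ} (hr : 0 < r) (hs : 0 < s)
    (hlX : P.map X = expMeasure r) (hlY : P.map Y = expMeasure s) {y : ℝ} (hy : 0 ≤ y) :
    P {ω | min (X ω) (Y ω) < y} = ENNReal.ofReal (1 - exp (-((r + s) * y))) := by
  have hcompl : {ω | min (X ω) (Y ω) < y} = (X ⁻¹' Ici y ∩ Y ⁻¹' Ici y)ᶜ := by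
    ext ω
    simp [or_iff_not_imp_left]
  have hsurvival : P (X ⁻¹' Ici y ∩ Y ⁻¹' Ici y) = ENNReal.ofReal (exp (-((r + s) * y))) := by
    rw [hXY.meas_inter ⟨Ici y, measurableSet_Ici, rfl⟩ ⟨Ici y, measurableSet_Ici, rfl⟩,
      ← Measure.map_apply hX measurableSet_Ici, ← Measure.map_apply hY measurableSet_Ici, hlX,
      hlY, expMeasure_Ici hr hy, expMeasure_Ici hs hy, ← ENNReal.ofReal_mul (exp_nonneg _),
      ← exp_add]
    ring_nf
  rw [hcompl, prob_compl_eq_one_sub ((hX measurableSet_Ici).inter (hY measurableSet_Ici)),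
    hsurvival, ← ENNReal.ofReal_one, ← ENNReal.ofReal_sub _ (exp_nonneg _)]

lemma setLIntegral_Iic_expMeasure {r γ : ℝ} (hr : 0 ≤ r) (hγ : 0 ≤ γ) {F : ℝ → ℝ≥0∞}
    {G : ℝ → ℝ} (hG : Continuous G) (hG_nonneg : ∀ y ∈ Icc 0 γ, 0 ≤ G y)
    (hFG : ∀ y ∈ Icc 0 γ, F y = ENNReal.ofReal (G y)) :
    ∫⁻ y in Iic γ, F y ∂expMeasure r
      = ENNReal.ofReal (r * ∫ y in 0..γ, exp (-(r * y)) * G y) := by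
  have hdensity : ∀ y ∈ Icc 0 γ,
      exponentialPDF r y * F y = ENNReal.ofReal (r * exp (-(r * y)) * G y) := fun y hy => by
    rw [exponentialPDF_of_nonneg hy.1, hFG y hy, ← ENNReal.ofReal_mul (by positivity)]
  have hint : IntegrableOn (fun y => r * exp (-(r * y)) * G y) (Icc 0 γ) :=
    (by fun_prop : Continuous fun y => r * exp (-(r * y)) * G y).integrableOn_Icc
  have hnonneg : 0 ≤ᵐ[volume.restrict (Icc 0 γ)] fun y => r * exp (-(r * y)) * G y :=
    (ae_restrict_iff' measurableSet_Icc).2 (ae_of_all _ fun y hy => by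
      have := hG_nonneg y hy; positivity)
  have hexp : expMeasure r = volume.withDensity (exponentialPDF r) := rfl
  have hmeas : Measurable (exponentialPDF r) := (measurable_exponentialPDFReal r).ennreal_ofReal
  rw [hexp, setLIntegral_withDensity_eq_setLIntegral_mul_non_measurable _ hmeas _
      measurableSet_Iic (ae_of_all _ fun _ => ENNReal.ofReal_lt_top),
    lintegral_Iic_eq_lintegral_Iio_add_Icc _ hγ,
    setLIntegral_congr_fun measurableSet_Iio (g := fun _ => 0) fun y hy => by
      simp [exponentialPDF_of_neg (mem_Iio.1 hy)],
    lintegral_zero, zero_add,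
    setLIntegral_congr_fun measurableSet_Icc (f := exponentialPDF r * F) hdensity,
    ← ofReal_integral_eq_lintegral_ofReal hint hnonneg, integral_Icc_eq_integral_Ioc,
    ← intervalIntegral.integral_of_le hγ, ← intervalIntegral.integral_const_mul]
  simp only [mul_assoc]

lemma iIndepFun.indepFun_comp_of_dependsOn {β α α' : Type*} [MeasurableSpace β] [Nonempty β]
    [MeasurableSpace α] [MeasurableSpace α'] {X : ι → Ω → β} (h : iIndepFun X P)
    (hX : ∀ i, Measurable (X i)) {S T : Finset ι} (hST : Disjoint S T) {φ : (ι → β) → α}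
    {ψ : (ι → β) → α'} (hφ : Measurable φ) (hψ : Measurable ψ) (hφS : DependsOn φ S)
    (hψT : DependsOn ψ T) :
    (fun ω => φ (fun i => X i ω)) ⟂ᵢ[P] (fun ω => ψ (fun i => X i ω)) := by
  classical
  let extend (s : Finset ι) (v : s → β) : ι → β :=
    fun i => if hi : i ∈ s then v ⟨i, hi⟩ else Classical.arbitrary β
  have hextend (s : Finset ι) : Measurable (extend s) := measurable_pi_lambda _ fun i => by
    by_cases hi : i ∈ s
    · simpa [extend, hi] using measurable_pi_apply (⟨i, hi⟩ : s)
    · simp [extend, hi]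
  convert (h.indepFun_finset S T hST hX).comp (hφ.comp (hextend S)) (hψ.comp (hextend T))
    using 1
  · exact funext fun ω => hφS fun i hi => by simp [extend, Finset.mem_coe.1 hi]
  · exact funext fun ω => hψT fun i hi => by simp [extend, Finset.mem_coe.1 hi]

lemma iIndepFun.prodMk_of_sumElim {β : Type*} [MeasurableSpace β] [Nonempty β]
    {f g : ι → Ω → β} (h : iIndepFun (Sum.elim f g) P) (hf : ∀ i, Measurable (f i))
    (hg : ∀ i, Measurable (g i)) :
    iIndepFun (fun i ω => (f i ω, g i ω)) P := by
  classical
  have := h.isProbabilityMeasure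
  have hX : ∀ k, Measurable (Sum.elim f g k) := Sum.forall.2 ⟨hf, hg⟩
  refine iIndepFun_iff_measure_inter_preimage_eq_mul.2 fun S A hA => ?_
  induction S using Finset.induction_on with
  | empty => simp
  | insert a S ha ih =>
    have hindep := h.indepFun_comp_of_dependsOn hX
      (S := {Sum.inl a, Sum.inr a}) (T := S.disjSum S) (by simp [ha])
      (φ := fun x => (x (Sum.inl a), x (Sum.inr a)))
      (ψ := fun x (i : S) => (x (Sum.inl i), x (Sum.inr i)))
      (by fun_prop) (by fun_prop) (fun x y hxy => by simp [hxy]) (fun x y hxy => by simp [hxy])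
    have hrest : ⋂ i ∈ S, (fun ω => (f i ω, g i ω)) ⁻¹' A i
        = (fun ω (i : S) => (f i ω, g i ω)) ⁻¹' Set.univ.pi fun i => A i := by
      ext; simp
    rw [Finset.set_biInter_insert, Finset.prod_insert ha, ← ih fun i hi => hA i (by simp [hi]),
      hrest]
    exact hindep.meas_inter ⟨A a, hA a (by simp), rfl⟩
      ⟨_, MeasurableSet.univ_pi fun i => hA i (by simp), rfl⟩

lemma measurableSet_le_and_forall_lt {κ : Type*} [Countable κ] (γ : ℝ) :
    MeasurableSet {p : ℝ × (κ → ℝ) | p.1 ≤ γ ∧ ∀ i, p.2 i < p.1} := by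
  simp only [ofPred_and, ofPred_forall]
  exact (measurableSet_le measurable_fst measurable_const).inter
    (MeasurableSet.iInter fun i => measurableSet_lt (by fun_prop) measurable_fst)

lemma IndepFun.measure_le_and_forall_lt {κ : Type*} [Countable κ] [IsFiniteMeasure P]
    {Y : Ω → ℝ} {Z : Ω → κ → ℝ} (hY : Measurable Y) (hZ : Measurable Z) (h : Y ⟂ᵢ[P] Z)
    (γ : ℝ) :
    P {ω | Y ω ≤ γ ∧ ∀ i, Z ω i < Y ω} = ∫⁻ y in Iic γ, P {ω | ∀ i, Z ω i < y} ∂P.map Y := by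
  let B : Set (ℝ × (κ → ℝ)) := {p | p.1 ≤ γ ∧ ∀ i, p.2 i < p.1}
  have hB : MeasurableSet B := measurableSet_le_and_forall_lt γ
  have hslice (y : ℝ) : P.map Z (Prod.mk y ⁻¹' B)
      = (Iic γ).indicator (fun y => P {ω | ∀ i, Z ω i < y}) y := by
    by_cases hy : y ≤ γ
    · rw [indicator_of_mem (mem_Iic.2 hy), Measure.map_apply hZ (measurable_prodMk_left hB)]
      simp [B, hy, preimage]
    · simp [B, hy]
  calc P {ω | Y ω ≤ γ ∧ ∀ i, Z ω i < Y ω} = P.map (fun ω => (Y ω, Z ω)) B :=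
        (Measure.map_apply (hY.prodMk hZ) hB).symm
    _ = ∫⁻ y, P.map Z (Prod.mk y ⁻¹' B) ∂P.map Y := by
      rw [(indepFun_iff_map_prod_eq_prod_map_map hY.aemeasurable hZ.aemeasurable).1 h,
        Measure.prod_apply hB]
    _ = ∫⁻ y in Iic γ, P {ω | ∀ i, Z ω i < y} ∂P.map Y := by
      simp_rw [hslice, lintegral_indicator measurableSet_Iic]

lemma iIndepFun.indepFun_sumElim_inl {β : Type*} [MeasurableSpace β] [Nonempty β]
    {f g : ι → Ω → β} (h : iIndepFun (Sum.elim f g) P) (hf : ∀ i, Measurable (f i))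
    (hg : ∀ i, Measurable (g i)) {s : Finset ι} {j : ι} (hj : j ∉ s) :
    f j ⟂ᵢ[P] fun ω => (g j ω, fun i : s => (f i ω, g i ω)) :=
  h.indepFun_comp_of_dependsOn (Sum.forall.2 ⟨hf, hg⟩) (S := {Sum.inl j})
    (T := s.disjSum (s.cons j hj)) (by simp [hj]) (φ := fun x => x (Sum.inl j))
    (ψ := fun x => (x (Sum.inr j), fun i : s => (x (Sum.inl i), x (Sum.inr i))))
    (by fun_prop) (by fun_prop) (fun x y hxy => by simp [hxy]) (fun x y hxy => by simp [hxy])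

lemma iIndepFun.indepFun_sumElim_inr {β : Type*} [MeasurableSpace β] [Nonempty β]
    {f g : ι → Ω → β} (h : iIndepFun (Sum.elim f g) P) (hf : ∀ i, Measurable (f i))
    (hg : ∀ i, Measurable (g i)) {s : Finset ι} {j : ι} (hj : j ∉ s) :
    g j ⟂ᵢ[P] fun ω (i : s) => (f i ω, g i ω) :=
  h.indepFun_comp_of_dependsOn (Sum.forall.2 ⟨hf, hg⟩) (S := {Sum.inr j}) (T := s.disjSum s)
    (by simp [hj]) (φ := fun x => x (Sum.inr j))
    (ψ := fun x (i : s) => (x (Sum.inl i), x (Sum.inr i)))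
    (by fun_prop) (by fun_prop) (fun x y hxy => by simp [hxy]) (fun x y hxy => by simp [hxy])

section SelectionEvent

variable {f g : ι → Ω → ℝ} {a b : ι → ℝ}

lemma iIndepFun.measure_forall_min_lt (h : iIndepFun (Sum.elim f g) P)
    (hf : ∀ i, Measurable (f i)) (hg : ∀ i, Measurable (g i)) (ha : ∀ i, 0 < a i)
    (hb : ∀ i, 0 < b i) (hlf : ∀ i, P.map (f i) = expMeasure (a i))
    (hlg : ∀ i, P.map (g i) = expMeasure (b i)) (s : Finset ι) {y : ℝ} (hy : 0 ≤ y) :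
    P {ω | ∀ i : s, min (f i ω) (g i ω) < y}
      = ENNReal.ofReal (∏ i ∈ s, (1 - exp (-((a i + b i) * y)))) := by
  have := h.isProbabilityMeasure
  have hmins := (h.prodMk_of_sumElim hf hg).comp (fun _ p => min p.1 p.2) fun _ => by fun_prop
  have hset : {ω | ∀ i : s, min (f i ω) (g i ω) < y}
      = ⋂ i ∈ s, {ω | min (f i ω) (g i ω) < y} := by
    ext; simp
  rw [hset, hmins.meas_biInter (s := fun i => {ω | min (f i ω) (g i ω) < y})
      fun i _ => ⟨Iio y, measurableSet_Iio, rfl⟩,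
    Finset.prod_congr rfl fun i _ => measure_min_lt_of_indepFun (hf i) (hg i)
      (h.indepFun Sum.inl_ne_inr) (ha i) (hb i) (hlf i) (hlg i) hy,
    ENNReal.ofReal_prod_of_nonneg fun i _ =>
      one_sub_exp_neg_mul_nonneg (add_pos (ha i) (hb i)).le hy]

lemma iIndepFun.measure_selection_event (h : iIndepFun (Sum.elim f g) P)
    (hf : ∀ i, Measurable (f i)) (hg : ∀ i, Measurable (g i)) (ha : ∀ i, 0 < a i)
    (hb : ∀ i, 0 < b i) (hlf : ∀ i, P.map (f i) = expMeasure (a i))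
    (hlg : ∀ i, P.map (g i) = expMeasure (b i)) {s : Finset ι} {j : ι} (hj : j ∉ s) {γ : ℝ}
    (hγ : 0 ≤ γ) :
    (P {ω | γ < f j ω ∧ g j ω ≤ γ ∧ ∀ i : s, min (f i ω) (g i ω) < g j ω}).toReal
      = exp (-(a j * γ)) *
          (b j * ∫ y in 0..γ, exp (-(b j * y)) * ∏ i ∈ s, (1 - exp (-((a i + b i) * y)))) := by
  have := h.isProbabilityMeasure
  let Z : Ω → s → ℝ := fun ω i => min (f i ω) (g i ω)
  have hZ : Measurable Z := measurable_pi_lambda _ fun i => (hf i).min (hg i)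
  have hfZ : f j ⟂ᵢ[P] fun ω => (g j ω, Z ω) :=
    (h.indepFun_sumElim_inl hf hg hj).comp (φ := id)
      (ψ := fun p : ℝ × (s → ℝ × ℝ) => (p.1, fun i => min (p.2 i).1 (p.2 i).2)) measurable_id
      (by fun_prop)
  have hgZ : g j ⟂ᵢ[P] Z := (h.indepFun_sumElim_inr hf hg hj).comp (φ := id)
    (ψ := fun (p : s → ℝ × ℝ) i => min (p i).1 (p i).2) measurable_id (by fun_prop)
  have hG_nonneg : ∀ y ∈ Icc 0 γ, 0 ≤ ∏ i ∈ s, (1 - exp (-((a i + b i) * y))) := fun y hy =>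
    Finset.prod_nonneg fun i _ => one_sub_exp_neg_mul_nonneg (add_pos (ha i) (hb i)).le hy.1
  have hintegral_nonneg : 0 ≤ ∫ y in 0..γ, exp (-(b j * y)) *
      ∏ i ∈ s, (1 - exp (-((a i + b i) * y))) :=
    intervalIntegral.integral_nonneg hγ fun y hy => mul_nonneg (exp_nonneg _) (hG_nonneg y hy)
  calc (P {ω | γ < f j ω ∧ g j ω ≤ γ ∧ ∀ i : s, Z ω i < g j ω}).toReal
      = (P (f j ⁻¹' Ioi γ) * P {ω | g j ω ≤ γ ∧ ∀ i, Z ω i < g j ω}).toReal :=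
        congrArg ENNReal.toReal (hfZ.meas_inter ⟨Ioi γ, measurableSet_Ioi, rfl⟩
          ⟨_, measurableSet_le_and_forall_lt γ, rfl⟩)
    _ = (ENNReal.ofReal (exp (-(a j * γ))) * ENNReal.ofReal (b j * ∫ y in 0..γ,
          exp (-(b j * y)) * ∏ i ∈ s, (1 - exp (-((a i + b i) * y))))).toReal := by
        rw [← Measure.map_apply (hf j) measurableSet_Ioi, hlf j, expMeasure_Ioi (ha j) hγ,
          hgZ.measure_le_and_forall_lt (hg j) hZ γ, hlg j,
          setLIntegral_Iic_expMeasure (hb j).le hγ (by fun_prop) hG_nonneg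
            fun y hy => h.measure_forall_min_lt hf hg ha hb hlf hlg s hy.1]
    _ = _ := by
        rw [ENNReal.toReal_mul, ENNReal.toReal_ofReal (exp_nonneg _),
          ENNReal.toReal_ofReal (mul_nonneg (hb j).le hintegral_nonneg)]

end SelectionEvent

end ProbabilityTheory

theorem selection_event_probability_general
    {Ω : Type*} [MeasurableSpace Ω] (P : Measure Ω) [IsProbabilityMeasure P]
    (N : ℕ) (γf γg : Fin N → Ω → ℝ)
    (hf : ∀ i, Measurable (γf i)) (hg : ∀ i, Measurable (γg i))
    (sf sg : Fin N → ℝ) (hsf : ∀ i, 0 < sf i) (hsg : ∀ i, 0 < sg i)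
    (hind : iIndepFun (Sum.elim γf γg) P)
    (hfe : ∀ i, ∀ x : ℝ, 0 ≤ x → (P {ω | γf i ω ≤ x}).toReal = 1 - Real.exp (-(x / sf i)))
    (hge : ∀ i, ∀ x : ℝ, 0 ≤ x → (P {ω | γg i ω ≤ x}).toReal = 1 - Real.exp (-(x / sg i))) :
    ∀ j : Fin N, ∀ γ : ℝ, 0 ≤ γ →
      (P {ω | min (γf j ω) (γg j ω) ≤ γ ∧
              (∀ i, i ≠ j → min (γf i ω) (γg i ω) < min (γf j ω) (γg j ω)) ∧
              γ < γf j ω}).toReal =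
        Real.exp (-(γ / sf j)) * ((1 / sg j) *
          ∫ β in (0:ℝ)..γ, Real.exp (-(β / sg j)) *
            ∏ i ∈ Finset.univ.erase j, (1 - Real.exp (-((1 / sf i + 1 / sg i) * β)))) := by
  intro j γ hγ
  have hevent : {ω | min (γf j ω) (γg j ω) ≤ γ ∧
        (∀ i, i ≠ j → min (γf i ω) (γg i ω) < min (γf j ω) (γg j ω)) ∧ γ < γf j ω}
      = {ω | γ < γf j ω ∧ γg j ω ≤ γ ∧
        ∀ i : Finset.univ.erase j, min (γf i ω) (γg i ω) < γg j ω} := by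
    ext ω
    simp only [Set.mem_ofPred_eq]
    constructor
    · rintro ⟨hmin, hlt, hγf⟩
      have hgγ : γg j ω ≤ γ := (min_le_iff.1 hmin).resolve_left hγf.not_ge
      rw [min_eq_right (hgγ.trans hγf.le)] at hlt
      exact ⟨hγf, hgγ, fun i => hlt i (Finset.mem_erase.1 i.2).1⟩
    · rintro ⟨hγf, hgγ, hlt⟩
      rw [min_eq_right (hgγ.trans hγf.le)]
      exact ⟨hgγ, fun i hi => hlt ⟨i, by simp [hi]⟩, hγf⟩
  rw [hevent, hind.measure_selection_event hf hg (fun i => one_div_pos.2 (hsf i))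
    (fun i => one_div_pos.2 (hsg i)) (fun i => map_eq_expMeasure_of_cdf (hf i) (hsf i) (hfe i))
    (fun i => map_eq_expMeasure_of_cdf (hg i) (hsg i) (hge i)) (Finset.notMem_erase j _) hγ]
  simp_rw [one_div_mul_eq_div]

theorem selection_event_probability
    {Ω : Type*} [MeasurableSpace Ω] (P : Measure Ω) [IsProbabilityMeasure P]
    (N : ℕ) (hN : 1 ≤ N) (γf γg : Fin N → Ω → ℝ)
    (hf : ∀ i, Measurable (γf i)) (hg : ∀ i, Measurable (γg i))
    (sf sg : Fin N → ℝ) (hsf : ∀ i, 0 < sf i) (hsg : ∀ i, 0 < sg i)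
    (hind : iIndepFun (Sum.elim γf γg) P)
    (hfpos : ∀ i ω, 0 ≤ γf i ω) (hgpos : ∀ i ω, 0 ≤ γg i ω)
    (hfe : ∀ i, ∀ x : ℝ, 0 ≤ x → (P {ω | γf i ω ≤ x}).toReal = 1 - Real.exp (-(x / sf i)))
    (hge : ∀ i, ∀ x : ℝ, 0 ≤ x → (P {ω | γg i ω ≤ x}).toReal = 1 - Real.exp (-(x / sg i))) :
    ∀ j : Fin N, ∀ γ : ℝ, 0 ≤ γ →
      (P {ω | min (γf j ω) (γg j ω) ≤ γ ∧
              (∀ i, i ≠ j → min (γf i ω) (γg i ω) < min (γf j ω) (γg j ω)) ∧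
              γ < γf j ω}).toReal =
        Real.exp (-(γ / sf j)) * ((1 / sg j) *
          ∫ β in (0:ℝ)..γ, Real.exp (-(β / sg j)) *
            ∏ i ∈ Finset.univ.erase j, (1 - Real.exp (-((1 / sf i + 1 / sg i) * β)))) :=
  selection_event_probability_general P N γf γg hf hg sf sg hsf hsg hind hfe hge
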